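/- arXiv:1502.03382 — 5 statements merged into one kernel-verified Lean document; each statement's English description precedes it below -/
import Mathlib

section
/- For every x > 1 one has φ(x) := ζ(x)/(x²−1) ≤ 2^{−2/3}, where ζ(x) = ( (3/4)·( x·√(x²−1) − arcosh x ) )^{2/3}. -/
/-!
With `s = √(x² - 1)`, both `A(x) = x s - arcosh x` and `(2/3) s³` vanish at `x = 1`, and their
derivatives are `2 s ≤ 2 x s`. Hence `0 ≤ A ≤ (2/3) s³`, and
`ζ = ((3/4) A)^{2/3} ≤ (s³ / 2)^{2/3} = 2^{-2/3} (x² - 1)`.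
-/

open Real Filter

/-- The inverse hyperbolic cosine, `arcosh x = log (x + √(x² - 1))`. -/
noncomputable def arcosh (x : ℝ) : ℝ := Real.log (x + Real.sqrt (x ^ 2 - 1))

/-- The variable `ζ(x) = ((3/4)(x√(x²-1) - arcosh x))^{2/3}` for `x ≥ 1`. -/
noncomputable def zeta (x : ℝ) : ℝ :=
  ((3 / 4) * (x * Real.sqrt (x ^ 2 - 1) - _root_.arcosh x)) ^ ((2 : ℝ) / 3)

open Set

lemma le_of_hasDerivAt_le_on_Ici {f g f' g' : ℝ → ℝ} {a x : ℝ} (hx : a ≤ x)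
    (hf : ContinuousOn f (Ici a)) (hg : ContinuousOn g (Ici a))
    (hf' : ∀ y, a < y → HasDerivAt f (f' y) y) (hg' : ∀ y, a < y → HasDerivAt g (g' y) y)
    (hle : ∀ y, a < y → f' y ≤ g' y) (ha : f a ≤ g a) : f x ≤ g x := by
  have hmono : MonotoneOn (g - f) (Ici a) := by
    refine monotoneOn_of_hasDerivWithinAt_nonneg (f' := g' - f') (convex_Ici a) (hg.sub hf) ?_ ?_
    · intro y hy
      rw [interior_Ici] at hy
      exact ((hg' y hy).sub (hf' y hy)).hasDerivWithinAt
    · intro y hy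
      rw [interior_Ici] at hy
      exact sub_nonneg.mpr (hle y hy)
  have := hmono self_mem_Ici hx hx
  simp only [Pi.sub_apply] at this
  linarith

lemma hasDerivAt_sqrt_sq_sub_one {x : ℝ} (hx : 1 < x) :
    HasDerivAt (fun y => √(y ^ 2 - 1)) (x / √(x ^ 2 - 1)) x := by
  have hpos : 0 < x ^ 2 - 1 := by nlinarith
  refine (((hasDerivAt_pow 2 x).sub_const 1).sqrt hpos.ne').congr_deriv ?_
  field_simp
  norm_num

/-- Twice the area under the hyperbola `t ↦ √(t² - 1)` between `1` and `x`. -/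
noncomputable def hyperbolicArea (x : ℝ) : ℝ := x * √(x ^ 2 - 1) - Real.arcosh x

lemma zeta_eq (x : ℝ) : zeta x = ((3 / 4) * hyperbolicArea x) ^ ((2 : ℝ) / 3) := rfl

lemma hyperbolicArea_one : hyperbolicArea 1 = 0 := by
  simp [hyperbolicArea, arcosh_zero]

lemma continuousOn_hyperbolicArea : ContinuousOn hyperbolicArea (Ici 1) :=
  (Continuous.continuousOn (by fun_prop)).sub continuousOn_arcosh

lemma hasDerivAt_hyperbolicArea {x : ℝ} (hx : 1 < x) :
    HasDerivAt hyperbolicArea (2 * √(x ^ 2 - 1)) x := by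
  have hs : 0 < √(x ^ 2 - 1) := sqrt_pos.mpr (by nlinarith)
  have hsq : √(x ^ 2 - 1) ^ 2 = x ^ 2 - 1 := sq_sqrt (by nlinarith)
  refine (((hasDerivAt_id' x).mul (hasDerivAt_sqrt_sq_sub_one hx)).sub
    (hasDerivAt_arcosh (mem_Ioi.mpr hx))).congr_deriv ?_
  field_simp
  linear_combination -hsq

lemma hyperbolicArea_nonneg {x : ℝ} (hx : 1 ≤ x) : 0 ≤ hyperbolicArea x := by
  refine le_of_hasDerivAt_le_on_Ici (f := fun _ => 0) hx continuousOn_const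
    continuousOn_hyperbolicArea (fun y _ => hasDerivAt_const y 0)
    (fun y hy => hasDerivAt_hyperbolicArea hy) (fun y _ => by positivity) ?_
  rw [hyperbolicArea_one]

lemma hyperbolicArea_le {x : ℝ} (hx : 1 ≤ x) :
    hyperbolicArea x ≤ 2 / 3 * √(x ^ 2 - 1) ^ 3 := by
  refine le_of_hasDerivAt_le_on_Ici (g := fun y => 2 / 3 * √(y ^ 2 - 1) ^ 3)
    (g' := fun y => 2 * y * √(y ^ 2 - 1)) hx continuousOn_hyperbolicArea
    (Continuous.continuousOn (by fun_prop)) (fun y hy => hasDerivAt_hyperbolicArea hy) ?_ ?_ ?_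
  · intro y hy
    have hs : 0 < √(y ^ 2 - 1) := sqrt_pos.mpr (by nlinarith)
    refine (((hasDerivAt_sqrt_sq_sub_one hy).fun_pow 3).const_mul (2 / 3)).congr_deriv ?_
    field_simp
    norm_num
  · intro y hy
    have := sqrt_nonneg (y ^ 2 - 1)
    nlinarith
  · simp [hyperbolicArea_one]

lemma half_cube_rpow_two_thirds {s : ℝ} (hs : 0 ≤ s) :
    (s ^ 3 / 2) ^ ((2 : ℝ) / 3) = (2 : ℝ) ^ (-(2 : ℝ) / 3) * s ^ 2 := by
  rw [div_rpow (by positivity) zero_le_two, ← rpow_natCast s 3, ← rpow_mul hs, neg_div,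
    rpow_neg zero_le_two]
  norm_num
  ring

theorem phi_le :
    ∀ x : ℝ, 1 < x → zeta x / (x ^ 2 - 1) ≤ (2 : ℝ) ^ (-(2 : ℝ) / 3) := by
  intro x hx
  have hpos : 0 < x ^ 2 - 1 := by nlinarith
  rw [div_le_iff₀ hpos, ← sq_sqrt hpos.le, ← half_cube_rpow_two_thirds (sqrt_nonneg _), zeta_eq]
  have hA := hyperbolicArea_le hx.le
  exact rpow_le_rpow (mul_nonneg (by norm_num) (hyperbolicArea_nonneg hx.le)) (by linarith)
    (by norm_num)
end

section
/- As x → 1 from the right, ( φ(x) − 2^{−2/3} ) / ζ(x) tends to −1/5, where φ(x) = ζ(x)/(x²−1) and ζ(x) = ( (3/4)·( x·√(x²−1) − arcosh x ) )^{2/3}. That is, the coefficient α₁ in the expansion φ = α₀ + α₁ζ + α₂ζ² + ⋯ equals −1/5. -/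
open Real Filter

/-- The function `φ(x) = ζ(x)/(x² - 1)`. -/
noncomputable def phi (x : ℝ) : ℝ := zeta x / (x ^ 2 - 1)

/-!
Put `v = x - 1`. Since `(ζ^{3/2})' = (3/2)√(x² - 1) = (3/2)√v √(2 + v)`, the bounds
`√2 (1 + v/4 - v²/32) ≤ √(2 + v) ≤ √2 (1 + v/4)` integrate to
`√2 v^{3/2} (1 + 3v/20 - 3v²/224) ≤ ζ^{3/2} ≤ √2 v^{3/2} (1 + 3v/20)` for `0 ≤ v ≤ 1`.
The quotient `(φ - 2^{-2/3})/ζ = 1/(v(v + 2)) - 2^{-2/3}/ζ` increases with `ζ`, and for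
`ζ^{3/2} = √2 v^{3/2} q(v)` it equals `F(v)/v` with `F(v) = (2 + v)⁻¹ - q(v)^{-2/3}/2`.
Since `F(0) = 0` and `F'(0) = -1/4 + q'(0)/3 = -1/5` whenever `q(0) = 1`, `q'(0) = 3/20`,
both bounds squeeze the quotient to `-1/5`.
-/

open Set Topology

theorem image_le_of_hasDerivAt_le {f g f' g' : ℝ → ℝ} {a b : ℝ} (hab : a ≤ b)
    (hf : ContinuousOn f (Icc a b)) (hg : ContinuousOn g (Icc a b))
    (hf' : ∀ x ∈ Ioo a b, HasDerivAt f (f' x) x) (hg' : ∀ x ∈ Ioo a b, HasDerivAt g (g' x) x)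
    (hle : ∀ x ∈ Ioo a b, f' x ≤ g' x) (ha : f a ≤ g a) : f b ≤ g b := by
  have hmono : MonotoneOn (g - f) (Icc a b) := by
    refine monotoneOn_of_deriv_nonneg (convex_Icc a b) (hg.sub hf) ?_ ?_ <;>
      rw [interior_Icc] <;> intro x hx
    · exact ((hg' x hx).sub (hf' x hx)).differentiableAt.differentiableWithinAt
    · rw [((hg' x hx).sub (hf' x hx)).deriv]
      exact sub_nonneg.2 (hle x hx)
  have h := hmono (left_mem_Icc.2 hab) (right_mem_Icc.2 hab) hab
  simp only [Pi.sub_apply] at h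
  linarith

lemma sqrt_two_add_le {v : ℝ} (hv : 0 ≤ v) : √(2 + v) ≤ √2 * (1 + v / 4) := by
  rw [Real.sqrt_le_left (by positivity), mul_pow, Real.sq_sqrt zero_le_two]
  nlinarith [sq_nonneg v]

lemma le_sqrt_two_add {v : ℝ} (hv0 : 0 ≤ v) (hv1 : v ≤ 1) :
    √2 * (1 + v / 4 - v ^ 2 / 32) ≤ √(2 + v) := by
  have hq : 0 ≤ 1 + v / 4 - v ^ 2 / 32 := by nlinarith
  rw [Real.le_sqrt (by positivity) (by positivity), mul_pow, Real.sq_sqrt zero_le_two]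
  nlinarith [pow_le_pow_of_le_one hv0 hv1 (by norm_num : 3 ≤ 4), pow_nonneg hv0 3]

lemma sqrt_one_add_sq_sub_one {v : ℝ} (hv : 0 ≤ v) : √((1 + v) ^ 2 - 1) = √v * √(2 + v) := by
  rw [← Real.sqrt_mul hv]
  ring_nf

noncomputable def zetaPowThreeHalves (x : ℝ) : ℝ :=
  3 / 4 * (x * √(x ^ 2 - 1) - _root_.arcosh x)

lemma zeta_eq_rpow (x : ℝ) : zeta x = zetaPowThreeHalves x ^ ((2 : ℝ) / 3) := rfl

lemma zetaPowThreeHalves_one : zetaPowThreeHalves 1 = 0 := by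
  simp [zetaPowThreeHalves, _root_.arcosh]

lemma continuousOn_zetaPowThreeHalves : ContinuousOn zetaPowThreeHalves (Ici 1) :=
  continuousOn_const.mul <|
    (by fun_prop : Continuous fun x : ℝ => x * √(x ^ 2 - 1)).continuousOn.sub
      Real.continuousOn_arcosh

lemma hasDerivAt_zetaPowThreeHalves {x : ℝ} (hx : 1 < x) :
    HasDerivAt zetaPowThreeHalves (3 / 2 * √(x ^ 2 - 1)) x := by
  have hs : 0 < x ^ 2 - 1 := by nlinarith
  have hsqrt := ((hasDerivAt_pow 2 x).sub_const 1).sqrt hs.ne'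
  refine ((((hasDerivAt_id' x).fun_mul hsqrt).fun_sub
    (Real.hasDerivAt_arcosh hx)).const_mul (3 / 4)).congr_deriv ?_
  have hr : 0 < √(x ^ 2 - 1) := Real.sqrt_pos.2 hs
  field_simp
  rw [Real.sq_sqrt hs.le]
  push_cast
  ring

noncomputable def zetaModel (b v : ℝ) : ℝ := √2 * (v * √v) * (1 + 3 / 20 * v + b * v ^ 2)

lemma zetaModel_pos {b v : ℝ} (hv : 0 < v) (hq : 0 < 1 + 3 / 20 * v + b * v ^ 2) :
    0 < zetaModel b v := by
  unfold zetaModel; positivity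

lemma hasDerivAt_zetaModel (b : ℝ) {v : ℝ} (hv : 0 < v) :
    HasDerivAt (zetaModel b) (3 / 2 * √2 * √v * (1 + v / 4 + 7 / 3 * b * v ^ 2)) v := by
  have hsqrt := (hasDerivAt_id' v).sqrt hv.ne'
  have hpoly := ((hasDerivAt_id' v).const_mul (3 / 20)).const_add 1 |>.fun_add
    ((hasDerivAt_pow 2 v).const_mul b)
  refine ((((hasDerivAt_id' v).fun_mul hsqrt).const_mul √2).fun_mul hpoly).congr_deriv ?_
  have hr : 0 < √v := Real.sqrt_pos.2 hv
  field_simp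
  rw [Real.sq_sqrt hv.le]
  simp only [Nat.cast_ofNat, Nat.add_one_sub_one, pow_one]
  ring

lemma hasDerivAt_zetaPowThreeHalves_one_add {v : ℝ} (hv : 0 < v) :
    HasDerivAt (fun v => zetaPowThreeHalves (1 + v)) (3 / 2 * (√v * √(2 + v))) v := by
  rw [← sqrt_one_add_sq_sub_one hv.le]
  exact (hasDerivAt_zetaPowThreeHalves (by linarith)).comp_const_add 1 v

lemma continuousOn_zetaPowThreeHalves_one_add :
    ContinuousOn (fun v => zetaPowThreeHalves (1 + v)) (Ici 0) :=
  continuousOn_zetaPowThreeHalves.comp (by fun_prop) fun w hw => by simpa using hw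

lemma continuous_zetaModel (b : ℝ) : Continuous (zetaModel b) := by
  unfold zetaModel; fun_prop

lemma zetaPowThreeHalves_le_zetaModel {v : ℝ} (hv : 0 ≤ v) :
    zetaPowThreeHalves (1 + v) ≤ zetaModel 0 v := by
  refine image_le_of_hasDerivAt_le hv
    (continuousOn_zetaPowThreeHalves_one_add.mono Icc_subset_Ici_self)
    (continuous_zetaModel 0).continuousOn
    (fun w hw => hasDerivAt_zetaPowThreeHalves_one_add hw.1)
    (fun w hw => hasDerivAt_zetaModel 0 hw.1) (fun w hw => ?_)
    (by simp [zetaPowThreeHalves_one, zetaModel])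
  simp only [zero_mul, mul_zero, add_zero]
  nlinarith [sqrt_two_add_le hw.1.le, Real.sqrt_nonneg w]

lemma zetaModel_le_zetaPowThreeHalves {v : ℝ} (hv0 : 0 ≤ v) (hv1 : v ≤ 1) :
    zetaModel (-3 / 224) v ≤ zetaPowThreeHalves (1 + v) := by
  refine image_le_of_hasDerivAt_le hv0 (continuous_zetaModel _).continuousOn
    (continuousOn_zetaPowThreeHalves_one_add.mono Icc_subset_Ici_self)
    (fun w hw => hasDerivAt_zetaModel _ hw.1)
    (fun w hw => hasDerivAt_zetaPowThreeHalves_one_add hw.1) (fun w hw => ?_)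
    (by simp [zetaPowThreeHalves_one, zetaModel])
  nlinarith [le_sqrt_two_add hw.1.le (hw.2.le.trans hv1), Real.sqrt_nonneg w]

lemma zetaPowThreeHalves_one_add_pos {v : ℝ} (hv0 : 0 < v) (hv1 : v ≤ 1) :
    0 < zetaPowThreeHalves (1 + v) :=
  (zetaModel_pos hv0 (by nlinarith)).trans_le (zetaModel_le_zetaPowThreeHalves hv0.le hv1)

noncomputable def phiCoeffQuotient (v t : ℝ) : ℝ :=
  1 / ((1 + v) ^ 2 - 1) - 2 ^ (-(2 : ℝ) / 3) / t ^ ((2 : ℝ) / 3)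

lemma phi_sub_div_zeta_eq_phiCoeffQuotient {v : ℝ} (hz : zeta (1 + v) ≠ 0) :
    (phi (1 + v) - 2 ^ (-(2 : ℝ) / 3)) / zeta (1 + v)
      = phiCoeffQuotient v (zetaPowThreeHalves (1 + v)) := by
  rw [phi, sub_div, div_div_cancel_left' hz, phiCoeffQuotient, zeta_eq_rpow, one_div]

lemma phiCoeffQuotient_le_of_le (v : ℝ) {s t : ℝ} (hs : 0 < s) (hst : s ≤ t) :
    phiCoeffQuotient v s ≤ phiCoeffQuotient v t := by
  unfold phiCoeffQuotient
  gcongr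

lemma zetaModel_rpow_two_thirds {b v : ℝ} (hv : 0 < v) (hq : 0 < 1 + 3 / 20 * v + b * v ^ 2) :
    zetaModel b v ^ ((2 : ℝ) / 3)
      = 2 ^ ((1 : ℝ) / 3) * v * (1 + 3 / 20 * v + b * v ^ 2) ^ ((2 : ℝ) / 3) := by
  have hv32 : v * √v = v ^ ((3 : ℝ) / 2) := by
    rw [Real.sqrt_eq_rpow, ← Real.rpow_one_add' hv.le (by norm_num)]
    norm_num
  rw [zetaModel, hv32, Real.sqrt_eq_rpow, Real.mul_rpow (by positivity) hq.le,
    Real.mul_rpow (by positivity) (by positivity), ← Real.rpow_mul zero_le_two,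
    ← Real.rpow_mul hv.le]
  norm_num

lemma phiCoeffQuotient_zetaModel {b v : ℝ} (hv : 0 < v) (hq : 0 < 1 + 3 / 20 * v + b * v ^ 2) :
    phiCoeffQuotient v (zetaModel b v)
      = ((2 + v)⁻¹ - 1 / 2 * (1 + 3 / 20 * v + b * v ^ 2) ^ (-(2 : ℝ) / 3)) / v := by
  have h2 : (2 : ℝ) ^ (-(2 : ℝ) / 3) = 2 ^ ((1 : ℝ) / 3) / 2 := by
    rw [show -(2 : ℝ) / 3 = 1 / 3 - 1 by norm_num, Real.rpow_sub_one two_ne_zero]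
  rw [phiCoeffQuotient, show (1 + v) ^ 2 - 1 = v * (2 + v) by ring,
    zetaModel_rpow_two_thirds hv hq, h2, neg_div, Real.rpow_neg hq.le]
  have : 0 < (1 + 3 / 20 * v + b * v ^ 2) ^ ((2 : ℝ) / 3) := by positivity
  have : 0 < (2 : ℝ) ^ ((1 : ℝ) / 3) := by positivity
  field_simp

lemma hasDerivAt_inv_two_add_sub_half_rpow (b : ℝ) :
    HasDerivAt (fun v : ℝ => (2 + v)⁻¹ - 1 / 2 * (1 + 3 / 20 * v + b * v ^ 2) ^ (-(2 : ℝ) / 3))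
      (-1 / 5) 0 := by
  have hq : HasDerivAt (fun v : ℝ => 1 + 3 / 20 * v + b * v ^ 2) (3 / 20) 0 := by
    simpa using (((hasDerivAt_id' (0 : ℝ)).const_mul (3 / 20)).const_add 1).fun_add
      ((hasDerivAt_pow 2 (0 : ℝ)).const_mul b)
  have hrpow := (hq.rpow_const (p := -(2 : ℝ) / 3) (Or.inl (by norm_num))).const_mul (1 / 2)
  refine (((hasDerivAt_id' (0 : ℝ)).const_add 2).inv (by norm_num)).fun_sub hrpow
    |>.congr_deriv ?_
  norm_num

lemma tendsto_phiCoeffQuotient_zetaModel (b : ℝ) :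
    Tendsto (fun v => phiCoeffQuotient v (zetaModel b v)) (𝓝[>] 0) (𝓝 (-1 / 5)) := by
  have hq : ∀ᶠ v in 𝓝[>] (0 : ℝ), 0 < 1 + 3 / 20 * v + b * v ^ 2 :=
    nhdsWithin_le_nhds <| ((by fun_prop : Continuous fun v : ℝ => 1 + 3 / 20 * v + b * v ^ 2)
      |>.tendsto' 0 1 (by norm_num)).eventually (lt_mem_nhds zero_lt_one)
  refine (hasDerivAt_inv_two_add_sub_half_rpow b).tendsto_slope_zero_right.congr' ?_
  filter_upwards [hq, self_mem_nhdsWithin] with v hqv hv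
  rw [phiCoeffQuotient_zetaModel hv hqv]
  simp [div_eq_inv_mul]

theorem tendsto_phi_coeff_one :
    Tendsto (fun x : ℝ => (phi x - (2 : ℝ) ^ (-(2 : ℝ) / 3)) / zeta x)
      (nhdsWithin 1 (Set.Ioi 1)) (nhds (-1 / 5)) := by
  have hquot : Tendsto (fun v => phiCoeffQuotient v (zetaPowThreeHalves (1 + v)))
      (𝓝[>] 0) (𝓝 (-1 / 5)) := by
    refine tendsto_of_tendsto_of_tendsto_of_le_of_le'
      (tendsto_phiCoeffQuotient_zetaModel (-3 / 224)) (tendsto_phiCoeffQuotient_zetaModel 0)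
      ?_ ?_ <;> filter_upwards [Ioo_mem_nhdsGT one_pos] with v ⟨hv0, hv1⟩
    · exact phiCoeffQuotient_le_of_le v (zetaModel_pos hv0 (by nlinarith))
        (zetaModel_le_zetaPowThreeHalves hv0.le hv1.le)
    · exact phiCoeffQuotient_le_of_le v (zetaPowThreeHalves_one_add_pos hv0 hv1.le)
        (zetaPowThreeHalves_le_zetaModel hv0.le)
  have hphi : Tendsto (fun v => (phi (1 + v) - 2 ^ (-(2 : ℝ) / 3)) / zeta (1 + v))
      (𝓝[>] 0) (𝓝 (-1 / 5)) := by
    refine hquot.congr' ?_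
    filter_upwards [Ioo_mem_nhdsGT one_pos] with v ⟨hv0, hv1⟩
    rw [phi_sub_div_zeta_eq_phiCoeffQuotient]
    exact (rpow_pos_of_pos (zetaPowThreeHalves_one_add_pos hv0 hv1.le) _).ne'
  have hshift : Tendsto (fun x : ℝ => x - 1) (𝓝[>] 1) (𝓝[>] 0) := by
    refine tendsto_nhdsWithin_of_tendsto_nhds_of_eventually_within _ ?_ ?_
    · simpa using ((continuous_sub_right (1 : ℝ)).tendsto 1).mono_left nhdsWithin_le_nhds
    · filter_upwards [self_mem_nhdsWithin] with x hx using sub_pos.2 (mem_Ioi.1 hx)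
  simpa [Function.comp_def] using hphi.comp hshift
end

section
/- As x → 1 from the right, ( φ(x) − 2^{−2/3} + (1/5)·ζ(x) ) / ζ(x)² tends to 2^{5/3}/35, where φ(x) = ζ(x)/(x²−1) and ζ(x) = ( (3/4)·( x·√(x²−1) − arcosh x ) )^{2/3}. That is, the coefficient α₂ in the expansion φ = α₀ + α₁ζ + α₂ζ² + ⋯ equals 2^{5/3}/35. -/
/-!
Put `y = √(x² - 1)`, so that `x = √(1 + y²)`, `arcosh x = arsinh y` and
`ζ^{3/2} = W(y) = (3/4)(y√(1 + y²) - arsinh y)`. Since `(y√(1 + y²) - arsinh y)' = 2y²/√(1 + y²)`,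
integrating the Taylor bound for `(1 + t)^{-1/2}` gives `2W/y³ = 1 - 3y²/10 + 9y⁴/56 + O(y⁶)`.
With `c = 2^{-2/3}` and `h = ζ(1 + y²/5)/(c y²)` one has `φ - c + ζ/5 = c(h - 1)` and
`h³ = (2W/y³)²(1 + y²/5)³ = 1 + (6/35)y⁴ + o(y⁴)`; writing `h - 1 = (h³ - 1)/(h² + h + 1)`,
the quotient tends to `(6/35)/(3c) = 2^{5/3}/35`.
-/

open Real Filter

open Topology

theorem abs_inv_sqrt_one_add_sub_le {t : ℝ} (ht0 : 0 ≤ t) (ht1 : t ≤ 1) :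
    |(√(1 + t))⁻¹ - (1 - t / 2 + 3 / 8 * t ^ 2)| ≤ t ^ 3 := by
  set r := (√(1 + t))⁻¹
  have hr0 : 0 < r := by positivity
  have hr : r ^ 2 * (1 + t) = 1 := by
    rw [inv_pow, sq_sqrt (by linarith)]; field_simp
  have hden : 1 ≤ (r + (1 - t / 2 + 3 / 8 * t ^ 2)) * (1 + t) := by nlinarith
  have hk : 0 ≤ 5 / 8 - 15 / 64 * t + 9 / 64 * t ^ 2 := by nlinarith
  have key : (r - (1 - t / 2 + 3 / 8 * t ^ 2)) * ((r + (1 - t / 2 + 3 / 8 * t ^ 2)) * (1 + t)) =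
      -(t ^ 3 * (5 / 8 - 15 / 64 * t + 9 / 64 * t ^ 2)) := by
    linear_combination hr
  rw [eq_div_of_mul_eq (by positivity) key, abs_div, abs_neg, abs_of_nonneg (by positivity),
    abs_of_pos (by positivity), div_le_iff₀ (by positivity)]
  have hk1 : 5 / 8 - 15 / 64 * t + 9 / 64 * t ^ 2 ≤ 1 := by nlinarith
  exact mul_le_mul_of_nonneg_left (hk1.trans hden) (by positivity)

theorem hasDerivAt_mul_sqrt_one_add_sq_sub_arsinh (y : ℝ) :
    HasDerivAt (fun y => y * √(1 + y ^ 2) - arsinh y) (2 * y ^ 2 * (√(1 + y ^ 2))⁻¹) y := by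
  have hs : 0 < √(1 + y ^ 2) := by positivity
  have h1 : HasDerivAt (fun y => √(1 + y ^ 2)) (y * (√(1 + y ^ 2))⁻¹) y := by
    convert ((hasDerivAt_pow 2 y).const_add 1).sqrt (by positivity) using 1
    field_simp
    ring
  refine (((hasDerivAt_id' y).mul h1).sub (hasDerivAt_arsinh y)).congr_deriv ?_
  field_simp
  rw [sq_sqrt (by positivity)]
  ring

theorem abs_mul_sqrt_one_add_sq_sub_arsinh_sub_le {y : ℝ} (hy0 : 0 ≤ y) (hy1 : y ≤ 1) :
    |y * √(1 + y ^ 2) - arsinh y - (2 / 3 * y ^ 3 - 1 / 5 * y ^ 5 + 3 / 28 * y ^ 7)| ≤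
      2 * y ^ 9 := by
  set D := fun t => t * √(1 + t ^ 2) - arsinh t - (2 / 3 * t ^ 3 - 1 / 5 * t ^ 5 + 3 / 28 * t ^ 7)
  have hD : ∀ t, HasDerivAt D
      (2 * t ^ 2 * ((√(1 + t ^ 2))⁻¹ - (1 - t ^ 2 / 2 + 3 / 8 * (t ^ 2) ^ 2))) t := by
    intro t
    refine ((hasDerivAt_mul_sqrt_one_add_sq_sub_arsinh t).sub
      ((((hasDerivAt_pow 3 t).const_mul (2 / 3)).sub ((hasDerivAt_pow 5 t).const_mul (1 / 5))).add
        ((hasDerivAt_pow 7 t).const_mul (3 / 28)))).congr_deriv ?_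
    norm_num
    ring
  have hbound : ∀ t ∈ Set.Ico 0 y,
      ‖2 * t ^ 2 * ((√(1 + t ^ 2))⁻¹ - (1 - t ^ 2 / 2 + 3 / 8 * (t ^ 2) ^ 2))‖ ≤ 2 * y ^ 8 := by
    rintro t ⟨ht0, hty⟩
    have ht1 : t ^ 2 ≤ 1 := by nlinarith
    have := abs_inv_sqrt_one_add_sub_le (sq_nonneg t) ht1
    rw [Real.norm_eq_abs, abs_mul, abs_of_nonneg (by positivity)]
    calc 2 * t ^ 2 * |_| ≤ 2 * t ^ 2 * (t ^ 2) ^ 3 := by gcongr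
      _ = 2 * t ^ 8 := by ring
      _ ≤ 2 * y ^ 8 := by gcongr
  have := norm_image_sub_le_of_norm_deriv_le_segment' (fun t _ => (hD t).hasDerivWithinAt)
    hbound y ⟨hy0, le_rfl⟩
  have hD0 : D 0 = 0 := by simp [D]
  rw [hD0, sub_zero, sub_zero, Real.norm_eq_abs] at this
  exact this.trans_eq (by ring)

/-- `ζ^{3/2}` as a function of `y = √(x² - 1)`. -/
noncomputable def zetaThreeHalves (y : ℝ) : ℝ := 3 / 4 * (y * √(1 + y ^ 2) - arsinh y)

theorem zetaThreeHalves_sqrt_sq_sub_one {x : ℝ} (hx : 1 ≤ x) :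
    zetaThreeHalves √(x ^ 2 - 1) = 3 / 4 * (x * √(x ^ 2 - 1) - _root_.arcosh x) := by
  have hx2 : 0 ≤ x ^ 2 - 1 := by nlinarith
  have hsqrt : √(1 + √(x ^ 2 - 1) ^ 2) = x := by
    rw [sq_sqrt hx2, add_sub_cancel, sqrt_sq (by linarith)]
  rw [zetaThreeHalves, arsinh, hsqrt, _root_.arcosh, add_comm x, mul_comm x]

theorem zetaThreeHalves_pos {y : ℝ} (hy : 0 < y) : 0 < zetaThreeHalves y := by
  have h1 : arsinh y < y := by
    simpa only [arsinh_sinh] using arsinh_lt_arsinh.mpr (self_lt_sinh_iff.mpr hy)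
  have h2 : 1 ≤ √(1 + y ^ 2) := by
    rw [one_le_sqrt]; nlinarith
  unfold zetaThreeHalves
  nlinarith

theorem abs_two_mul_zetaThreeHalves_div_sub_le {y : ℝ} (hy0 : 0 < y) (hy1 : y ≤ 1) :
    |2 * zetaThreeHalves y / y ^ 3 - (1 - 3 / 10 * y ^ 2 + 9 / 56 * y ^ 4)| ≤ 3 * y ^ 6 := by
  have h := abs_mul_sqrt_one_add_sq_sub_arsinh_sub_le hy0.le hy1
  have hy3 : 0 < y ^ 3 := by positivity
  have heq : 2 * zetaThreeHalves y / y ^ 3 - (1 - 3 / 10 * y ^ 2 + 9 / 56 * y ^ 4) =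
      3 / 2 * (y * √(1 + y ^ 2) - arsinh y -
        (2 / 3 * y ^ 3 - 1 / 5 * y ^ 5 + 3 / 28 * y ^ 7)) / y ^ 3 := by
    unfold zetaThreeHalves; field_simp; ring
  rw [heq, abs_div, abs_mul, abs_of_pos hy3, div_le_iff₀ hy3]
  calc |(3 / 2 : ℝ)| * |_| ≤ 3 / 2 * (2 * y ^ 9) := by rw [abs_of_pos (by norm_num)]; gcongr
    _ = 3 * y ^ 6 * y ^ 3 := by ring

theorem tendsto_sq_mul_one_add_sq_div_five_pow_three_sub_one_div {v : ℝ → ℝ} {C : ℝ}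
    (hv : ∀ᶠ y in 𝓝[>] 0, |v y - (1 - 3 / 10 * y ^ 2 + 9 / 56 * y ^ 4)| ≤ C * y ^ 6) :
    Tendsto (fun y => (v y ^ 2 * (1 + y ^ 2 / 5) ^ 3 - 1) / y ^ 4) (𝓝[>] 0) (𝓝 (6 / 35)) := by
  set p : ℝ → ℝ := fun y => 1 - 3 / 10 * y ^ 2 + 9 / 56 * y ^ 4
  have hcont : ∀ f : ℝ → ℝ, Continuous f → ∀ a, f 0 = a → Tendsto f (𝓝[>] 0) (𝓝 a) :=
    fun f hf a ha => ha ▸ hf.continuousWithinAt.tendsto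
  have he : Tendsto (fun y => (v y - p y) / y ^ 4) (𝓝[>] 0) (𝓝 0) := by
    refine squeeze_zero_norm' ?_ (hcont (fun y => C * y ^ 2) (by fun_prop) 0 (by simp))
    filter_upwards [hv, self_mem_nhdsWithin] with y hy (hy0 : 0 < y)
    rw [norm_div, Real.norm_eq_abs, Real.norm_eq_abs, abs_of_pos (by positivity : (0 : ℝ) < y ^ 4),
      div_le_iff₀ (by positivity)]
    exact hy.trans_eq (by ring)
  have hp : Tendsto p (𝓝[>] 0) (𝓝 1) := hcont p (by fun_prop) 1 (by simp [p])
  have hv1 : Tendsto v (𝓝[>] 0) (𝓝 1) := by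
    have := hp.add (he.mul (hcont (fun y => y ^ 4) (by fun_prop) 0 (by simp)))
    rw [mul_zero, add_zero] at this
    refine this.congr' ?_
    filter_upwards [self_mem_nhdsWithin] with y (hy0 : 0 < y)
    field_simp; ring
  -- `R y = (p y ^ 2 * (1 + y ^ 2 / 5) ^ 3 - 1) / y ^ 4`
  set R : ℝ → ℝ := fun y => 6 / 35 + 121 / 1400 * y ^ 2 + 4917 / 392000 * y ^ 4 +
    70731 / 9800000 * y ^ 6 + 4563 / 1960000 * y ^ 8 + 81 / 392000 * y ^ 10
  have hlim := (hcont R (by fun_prop) (6 / 35) (by simp [R])).add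
    (he.mul ((hv1.add hp).mul (hcont (fun y => (1 + y ^ 2 / 5) ^ 3) (by fun_prop) 1 (by simp))))
  rw [zero_mul, add_zero] at hlim
  refine hlim.congr' ?_
  filter_upwards [self_mem_nhdsWithin] with y (hy0 : 0 < y)
  field_simp
  ring

theorem div_sq_eq_cube_sub_one_div {c s ζ h : ℝ} (hc : c ≠ 0) (hs : s ≠ 0) (h5 : 1 + s / 5 ≠ 0)
    (hh : ζ * (1 + s / 5) = c * s * h) :
    (ζ / s - c + 1 / 5 * ζ) / ζ ^ 2 =
      (h ^ 3 - 1) / s ^ 2 * (1 + s / 5) ^ 2 / (c * h ^ 2 * (h ^ 2 + h + 1)) := by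
  obtain rfl : ζ = c * s * h / (1 + s / 5) := eq_div_of_mul_eq h5 hh
  rcases eq_or_ne h 0 with rfl | hh0
  · simp
  have hq : h ^ 2 + h + 1 ≠ 0 := by nlinarith [sq_nonneg (h + 1 / 2)]
  have h5' : 5 + s ≠ 0 := by contrapose! h5; linarith
  rw [eq_div_iff (mul_ne_zero (by positivity) hq)]
  field_simp
  ring

theorem tendsto_div_sq_of_tendsto_cube_sub_one {α : Type*} {l : Filter α} {c K : ℝ} (hc : c ≠ 0)
    {s ζ : α → ℝ} (hs : Tendsto s l (𝓝 0)) (hs0 : ∀ᶠ a in l, s a ≠ 0)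
    (hK : Tendsto (fun a => ((ζ a * (1 + s a / 5) / (c * s a)) ^ 3 - 1) / s a ^ 2) l (𝓝 K)) :
    Tendsto (fun a => (ζ a / s a - c + 1 / 5 * ζ a) / ζ a ^ 2) l (𝓝 (K / (3 * c))) := by
  set h := fun a => ζ a * (1 + s a / 5) / (c * s a) with h_def
  replace hK : Tendsto (fun a => (h a ^ 3 - 1) / s a ^ 2) l (𝓝 K) := hK
  have hcube : Tendsto (fun a => h a ^ 3 - 1) l (𝓝 0) := by
    have := hK.mul (hs.pow 2)
    rw [zero_pow two_ne_zero, mul_zero] at this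
    refine this.congr' ?_
    filter_upwards [hs0] with a ha
    exact div_mul_cancel₀ _ (pow_ne_zero 2 ha)
  -- `h² + h + 1 ≥ 3/4`, so `|h - 1| ≤ 4/3 |h³ - 1|`
  have hh : Tendsto h l (𝓝 1) := by
    rw [tendsto_iff_norm_sub_tendsto_zero]
    have := hcube.norm.const_mul (4 / 3)
    rw [norm_zero, mul_zero] at this
    refine squeeze_zero (fun _ => norm_nonneg _) (fun a => ?_) this
    have hq : 3 / 4 ≤ h a ^ 2 + h a + 1 := by nlinarith [sq_nonneg (h a + 1 / 2)]
    have hfac : h a ^ 3 - 1 = (h a - 1) * (h a ^ 2 + h a + 1) := by ring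
    rw [hfac, norm_mul, Real.norm_of_nonneg (by linarith : 0 ≤ h a ^ 2 + h a + 1)]
    nlinarith [norm_nonneg (h a - 1)]
  have h5 : ∀ᶠ a in l, 1 + s a / 5 ≠ 0 := by
    filter_upwards [hs.eventually (Ioi_mem_nhds (by norm_num : (-5 : ℝ) < 0))]
      with a (ha : -5 < s a)
    linarith
  have key : ∀ᶠ a in l, (h a ^ 3 - 1) / s a ^ 2 * (1 + s a / 5) ^ 2 /
      (c * h a ^ 2 * (h a ^ 2 + h a + 1)) = (ζ a / s a - c + 1 / 5 * ζ a) / ζ a ^ 2 := by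
    filter_upwards [hs0, h5] with a ha ha5
    refine (div_sq_eq_cube_sub_one_div hc ha ha5 ?_).symm
    rw [h_def]
    field_simp
  have hlim := (hK.mul (((tendsto_const_nhds (x := (1 : ℝ))).add (hs.div_const 5)).pow 2)).div
    (((tendsto_const_nhds (x := c)).mul (hh.pow 2)).mul
      (((hh.pow 2).add hh).add (tendsto_const_nhds (x := (1 : ℝ))))) (by norm_num [hc])
  rw [show K * (1 + 0 / 5) ^ 2 / (c * 1 ^ 2 * (1 ^ 2 + 1 + 1)) = K / (3 * c) by ring] at hlim
  exact hlim.congr' key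

theorem tendsto_zetaThreeHalves_coeff_two :
    Tendsto (fun y => (zetaThreeHalves y ^ ((2 : ℝ) / 3) / y ^ 2 - 2 ^ (-(2 : ℝ) / 3) +
        1 / 5 * zetaThreeHalves y ^ ((2 : ℝ) / 3)) / (zetaThreeHalves y ^ ((2 : ℝ) / 3)) ^ 2)
      (𝓝[>] 0) (𝓝 (6 / 35 / (3 * 2 ^ (-(2 : ℝ) / 3)))) := by
  have hc3 : ((2 : ℝ) ^ (-(2 : ℝ) / 3)) ^ 3 = 1 / 4 := by
    rw [← rpow_natCast, ← rpow_mul two_pos.le]; norm_num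
  refine tendsto_div_sq_of_tendsto_cube_sub_one (by positivity) (s := fun y => y ^ 2) ?_ ?_ ?_
  · exact ((continuous_pow 2).tendsto' 0 0 (by simp)).mono_left nhdsWithin_le_nhds
  · filter_upwards [self_mem_nhdsWithin] with y (hy : 0 < y) using by positivity
  refine (tendsto_sq_mul_one_add_sq_div_five_pow_three_sub_one_div
    (v := fun y => 2 * zetaThreeHalves y / y ^ 3) (C := 3) ?_).congr' ?_
  · filter_upwards [Ioc_mem_nhdsGT (by norm_num : (0 : ℝ) < 1)] with y ⟨hy0, hy1⟩
    exact abs_two_mul_zetaThreeHalves_div_sub_le hy0 hy1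
  · filter_upwards [self_mem_nhdsWithin] with y (hy : 0 < y)
    have hζ3 : (zetaThreeHalves y ^ ((2 : ℝ) / 3)) ^ 3 = zetaThreeHalves y ^ 2 := by
      rw [← rpow_natCast, ← rpow_mul (zetaThreeHalves_pos hy).le]; norm_num
    simp only [div_pow, mul_pow, hζ3, hc3]
    field_simp
    ring

theorem tendsto_sqrt_sq_sub_one_nhdsGT_one :
    Tendsto (fun x : ℝ => √(x ^ 2 - 1)) (𝓝[>] 1) (𝓝[>] 0) := by
  refine tendsto_nhdsWithin_iff.mpr ⟨?_, ?_⟩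
  · exact (((continuous_pow 2).sub continuous_const).sqrt.tendsto' 1 0 (by simp)).mono_left
      nhdsWithin_le_nhds
  · filter_upwards [self_mem_nhdsWithin] with x (hx : 1 < x)
    exact sqrt_pos.mpr (by nlinarith)

theorem tendsto_phi_coeff_two :
    Tendsto (fun x : ℝ =>
        (phi x - (2 : ℝ) ^ (-(2 : ℝ) / 3) + (1 / 5) * zeta x) / zeta x ^ 2)
      (nhdsWithin 1 (Set.Ioi 1)) (nhds ((2 : ℝ) ^ ((5 : ℝ) / 3) / 35)) := by
  have hval : (6 / 35 : ℝ) / (3 * 2 ^ (-(2 : ℝ) / 3)) = 2 ^ ((5 : ℝ) / 3) / 35 := by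
    rw [show (5 : ℝ) / 3 = 1 - (-(2 : ℝ) / 3) by norm_num, rpow_sub two_pos, rpow_one]
    field_simp
    ring
  rw [← hval]
  refine (tendsto_zetaThreeHalves_coeff_two.comp tendsto_sqrt_sq_sub_one_nhdsGT_one).congr' ?_
  filter_upwards [self_mem_nhdsWithin] with x (hx : 1 < x)
  rw [Function.comp_apply, phi, zeta, zetaThreeHalves_sqrt_sq_sub_one hx.le,
    sq_sqrt (by nlinarith)]
end

section
/- The function −b₀(x), where b₀(x) = −(1/(2·ζ(x)^{1/2}))·( x(x²−6)/(12(x²−1)^{3/2}) + 5/(24·ζ(x)^{3/2}) ) and ζ(x) = ( (3/4)·( x·√(x²−1) − arcosh x ) )^{2/3}, is strictly monotonically decreasing on the interval (1, ∞) and tends to 0 as x → ∞. -/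
open Real Filter

/-- The coefficient function
`b₀(x) = -(1/(2ζ^{1/2}))·(x(x²-6)/(12(x²-1)^{3/2}) + 5/(24ζ^{3/2}))`. -/
noncomputable def b0 (x : ℝ) : ℝ :=
  -(1 / (2 * zeta x ^ ((1 : ℝ) / 2))) *
    (x * (x ^ 2 - 6) / (12 * (x ^ 2 - 1) ^ ((3 : ℝ) / 2)) +
      5 / (24 * zeta x ^ ((3 : ℝ) / 2)))

/-! Put `w = ζ^{3/2} = (3/4)(x√(x²-1) - arcosh x)` and `u = w^{1/3} = ζ^{1/2}`, so that
`w' = (3/2)√(x²-1)` and `-b₀ = r/u + 5/(48u⁴)` with `r = (x³-6x)/(24(x²-1)^{3/2})`.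
The derivative of `-b₀` has the sign of the quadratic
`(18x²+12)w² - (x³-6x)(x²-1)^{3/2} w - 10(x²-1)³` in `w`, which is negative as long as
`w` stays below its positive root `W(x)`. Both `W` and `w` vanish at `x = 1`, and
`(W - w)'` is `√(x²-1)` times an expression whose positivity for `x > 1` reduces to a
polynomial inequality with positive coefficients in `x - 1`.
For the limit, `r` stays bounded while `u → ∞`. -/

open Set Topology

theorem pos_of_eq_zero_of_hasDerivAt_pos {f f' : ℝ → ℝ} {a x : ℝ}
    (hf : ContinuousOn f (Ici a)) (hfa : f a = 0) (hderiv : ∀ y, a < y → HasDerivAt f (f' y) y)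
    (hpos : ∀ y, a < y → 0 < f' y) (hx : a < x) : 0 < f x := by
  have hmono : StrictMonoOn f (Ici a) :=
    strictMonoOn_of_deriv_pos (convex_Ici a) hf fun y hy => by
      rw [interior_Ici] at hy
      rw [(hderiv y hy).deriv]
      exact hpos y hy
  simpa [hfa] using hmono self_mem_Ici hx.le hx

theorem add_pos_of_sq_lt_sq {a b : ℝ} (ha : 0 < a) (h : b ^ 2 < a ^ 2) : 0 < a + b := by
  linarith [neg_lt_of_abs_lt (abs_lt_of_sq_lt_sq h ha.le)]

theorem quadratic_neg_of_lt_root {α β γ δ w : ℝ} (hα : 0 < α) (hγ : 0 < γ) (hδ : 0 ≤ δ)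
    (hδsq : δ ^ 2 = β ^ 2 + 4 * α * γ) (hw : 0 < w) (hlt : 2 * α * w < β + δ) :
    α * w ^ 2 - β * w - γ < 0 := by
  have hfactor :
      4 * α * (α * w ^ 2 - β * w - γ) = (2 * α * w - β - δ) * (2 * α * w - β + δ) := by
    linear_combination hδsq
  have hβδ : β < δ := (abs_lt_of_sq_lt_sq' (by nlinarith [mul_pos hα hγ]) hδ).2
  have hprod : (2 * α * w - β - δ) * (2 * α * w - β + δ) < 0 :=
    mul_neg_of_neg_of_pos (by linarith) (by nlinarith [mul_pos hα hw])
  nlinarith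

noncomputable section

namespace B0

variable {x : ℝ}

def zetaThreeHalves (x : ℝ) : ℝ := 3 / 4 * (x * √(x ^ 2 - 1) - Real.arcosh x)

def sqrtZeta (x : ℝ) : ℝ := zetaThreeHalves x ^ (1 / 3 : ℝ)

def ratTerm (x : ℝ) : ℝ := (x ^ 3 - 6 * x) / (24 * √(x ^ 2 - 1) ^ 3)

def negB0Closed (x : ℝ) : ℝ := ratTerm x / sqrtZeta x + 5 / (48 * sqrtZeta x ^ 4)

def discrSqrt (x : ℝ) : ℝ := √((x ^ 3 - 6 * x) ^ 2 + 720 * x ^ 2 + 480)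

def upperRoot (x : ℝ) : ℝ :=
  √(x ^ 2 - 1) ^ 3 * (x ^ 3 - 6 * x + discrSqrt x) / (36 * x ^ 2 + 24)

lemma sqrt_sq_sub_one_pos (hx : 1 < x) : 0 < √(x ^ 2 - 1) :=
  Real.sqrt_pos.2 (by nlinarith)

lemma sq_sqrt_sq_sub_one (hx : 1 ≤ x) : √(x ^ 2 - 1) ^ 2 = x ^ 2 - 1 :=
  Real.sq_sqrt (by nlinarith)

lemma hasDerivAt_sqrt_sq_sub_one (hx : 1 < x) :
    HasDerivAt (fun y => √(y ^ 2 - 1)) (x / √(x ^ 2 - 1)) x := by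
  convert ((hasDerivAt_pow 2 x).sub_const 1).sqrt (by nlinarith) using 1
  field_simp
  ring

lemma hasDerivAt_zetaThreeHalves (hx : 1 < x) :
    HasDerivAt zetaThreeHalves (3 / 2 * √(x ^ 2 - 1)) x := by
  have hs := sqrt_sq_sub_one_pos hx
  refine ((((hasDerivAt_id' x).fun_mul (hasDerivAt_sqrt_sq_sub_one hx)).fun_sub
    (Real.hasDerivAt_arcosh hx)).const_mul (3 / 4)).congr_deriv ?_
  field_simp
  linear_combination (-2) * sq_sqrt_sq_sub_one hx.le

lemma continuousOn_zetaThreeHalves : ContinuousOn zetaThreeHalves (Ici 1) := by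
  have := Real.continuousOn_arcosh
  unfold zetaThreeHalves
  fun_prop

lemma zetaThreeHalves_pos (hx : 1 < x) : 0 < zetaThreeHalves x :=
  pos_of_eq_zero_of_hasDerivAt_pos continuousOn_zetaThreeHalves (by simp [zetaThreeHalves])
    (fun _ hy => hasDerivAt_zetaThreeHalves hy)
    (fun _ hy => mul_pos (by norm_num) (sqrt_sq_sub_one_pos hy)) hx

lemma sqrtZeta_pos (hx : 1 < x) : 0 < sqrtZeta x :=
  Real.rpow_pos_of_pos (zetaThreeHalves_pos hx) _

lemma sqrtZeta_pow_three (hx : 1 < x) : sqrtZeta x ^ 3 = zetaThreeHalves x := by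
  rw [sqrtZeta, ← Real.rpow_natCast, ← Real.rpow_mul (zetaThreeHalves_pos hx).le]
  norm_num

lemma hasDerivAt_sqrtZeta (hx : 1 < x) :
    HasDerivAt sqrtZeta (√(x ^ 2 - 1) / (2 * sqrtZeta x ^ 2)) x := by
  have hw := zetaThreeHalves_pos hx
  have hu := sqrtZeta_pos hx
  refine ((hasDerivAt_zetaThreeHalves hx).rpow_const (p := 1 / 3) (Or.inl hw.ne')).congr_deriv ?_
  have hu' : zetaThreeHalves x ^ (1 / 3 : ℝ) = sqrtZeta x := rfl
  rw [Real.rpow_sub_one hw.ne', hu', ← sqrtZeta_pow_three hx]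
  field_simp

lemma neg_b0_eq (hx : 1 < x) : -b0 x = negB0Closed x := by
  have hw := zetaThreeHalves_pos hx
  have hu := sqrtZeta_pos hx
  have hs := sqrt_sq_sub_one_pos hx
  have hzeta : zeta x = zetaThreeHalves x ^ (2 / 3 : ℝ) := rfl
  have hhalf : zeta x ^ (1 / 2 : ℝ) = sqrtZeta x := by
    rw [hzeta, ← Real.rpow_mul hw.le, sqrtZeta]; norm_num
  have hthreeHalves : zeta x ^ (3 / 2 : ℝ) = sqrtZeta x ^ 3 := by
    rw [hzeta, ← Real.rpow_mul hw.le, sqrtZeta_pow_three hx]; norm_num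
  have hsqrt : (x ^ 2 - 1) ^ (3 / 2 : ℝ) = √(x ^ 2 - 1) ^ 3 := by
    rw [show (3 / 2 : ℝ) = 1 / 2 * 3 by norm_num, Real.rpow_mul (by nlinarith),
      ← Real.sqrt_eq_rpow]
    norm_cast
  rw [b0, negB0Closed, ratTerm, hhalf, hthreeHalves, hsqrt]
  field_simp
  ring

lemma hasDerivAt_ratTerm (hx : 1 < x) :
    HasDerivAt ratTerm ((3 * x ^ 2 + 2) / (8 * √(x ^ 2 - 1) ^ 5)) x := by
  have hs := sqrt_sq_sub_one_pos hx
  refine (((hasDerivAt_pow 3 x).fun_sub ((hasDerivAt_id' x).const_mul 6)).fun_div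
    (((hasDerivAt_sqrt_sq_sub_one hx).fun_pow 3).const_mul 24) (by positivity)).congr_deriv ?_
  field_simp
  linear_combination 24 * √(x ^ 2 - 1) ^ 2 * (x ^ 2 - 2) * sq_sqrt_sq_sub_one hx.le

lemma hasDerivAt_negB0Closed (hx : 1 < x) :
    HasDerivAt negB0Closed (((18 * x ^ 2 + 12) * zetaThreeHalves x ^ 2 -
      (x ^ 3 - 6 * x) * √(x ^ 2 - 1) ^ 3 * zetaThreeHalves x - 10 * (√(x ^ 2 - 1) ^ 3) ^ 2) /
        (48 * √(x ^ 2 - 1) ^ 5 * sqrtZeta x ^ 7)) x := by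
  have hs := sqrt_sq_sub_one_pos hx
  have hu := sqrtZeta_pos hx
  refine (((hasDerivAt_ratTerm hx).fun_div (hasDerivAt_sqrtZeta hx) hu.ne').fun_add
    ((hasDerivAt_const x (5 : ℝ)).fun_div (((hasDerivAt_sqrtZeta hx).fun_pow 4).const_mul 48)
      (by positivity))).congr_deriv ?_
  rw [← sqrtZeta_pow_three hx, ratTerm]
  field_simp
  ring

lemma discrSqrt_pos (x : ℝ) : 0 < discrSqrt x := Real.sqrt_pos.2 (by positivity)

lemma discrSqrt_sq (x : ℝ) : discrSqrt x ^ 2 = (x ^ 3 - 6 * x) ^ 2 + 720 * x ^ 2 + 480 :=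
  Real.sq_sqrt (by positivity)

lemma hasDerivAt_discrSqrt (x : ℝ) :
    HasDerivAt discrSqrt ((3 * x ^ 5 - 24 * x ^ 3 + 756 * x) / discrSqrt x) x := by
  have hq := discrSqrt_pos x
  refine (((((hasDerivAt_pow 3 x).fun_sub ((hasDerivAt_id' x).const_mul 6)).fun_pow 2).fun_add
    ((hasDerivAt_pow 2 x).const_mul 720)).add_const 480).sqrt (by positivity) |>.congr_deriv ?_
  rw [← discrSqrt]
  field_simp
  ring

lemma hasDerivAt_upperRoot_sub_zetaThreeHalves (hx : 1 < x) :
    HasDerivAt (fun y => upperRoot y - zetaThreeHalves y)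
      (√(x ^ 2 - 1) * ((4 * x ^ 9 - 33 * x ^ 7 + 1470 * x ^ 5 + 3268 * x ^ 3 + 1416 * x) +
        (4 * x ^ 6 - 63 * x ^ 4 - 96 * x ^ 2 - 20) * discrSqrt x) /
          (4 * discrSqrt x * (3 * x ^ 2 + 2) ^ 2)) x := by
  have hs := sqrt_sq_sub_one_pos hx
  have hq := discrSqrt_pos x
  have hs3 : √(x ^ 2 - 1) ^ 3 = √(x ^ 2 - 1) * (x ^ 2 - 1) := by
    rw [pow_succ, sq_sqrt_sq_sub_one hx.le, mul_comm]
  refine (((((hasDerivAt_sqrt_sq_sub_one hx).fun_pow 3).fun_mul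
    (((hasDerivAt_pow 3 x).fun_sub ((hasDerivAt_id' x).const_mul 6)).fun_add
      (hasDerivAt_discrSqrt x))).fun_div
      (((hasDerivAt_pow 2 x).const_mul 36).add_const 24) (by positivity)).fun_sub
        (hasDerivAt_zetaThreeHalves hx)).congr_deriv ?_
  simp only [Nat.cast_ofNat, hs3, show 3 - 1 = 2 by rfl, show 2 - 1 = 1 by rfl, pow_one]
  field_simp
  linear_combination 288 * x * (x ^ 2 + 4) * (3 * x ^ 2 + 2) ^ 2 * discrSqrt_sq x

lemma add_mul_discrSqrt_pos (hx : 1 < x) :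
    0 < (4 * x ^ 9 - 33 * x ^ 7 + 1470 * x ^ 5 + 3268 * x ^ 3 + 1416 * x) +
      (4 * x ^ 6 - 63 * x ^ 4 - 96 * x ^ 2 - 20) * discrSqrt x := by
  obtain ⟨y, hy, rfl⟩ : ∃ y, 0 < y ∧ x = 1 + y := ⟨x - 1, by linarith, by ring⟩
  refine add_pos_of_sq_lt_sq ?_ ?_
  · have hshift : 4 * (1 + y) ^ 9 - 33 * (1 + y) ^ 7 + 1470 * (1 + y) ^ 5 + 3268 * (1 + y) ^ 3 +
        1416 * (1 + y) = 6125 + 18375 * y + 23955 * y ^ 2 + 17149 * y ^ 3 + 6699 * y ^ 4 +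
          1281 * y ^ 5 + 105 * y ^ 6 + 111 * y ^ 7 + 36 * y ^ 8 + 4 * y ^ 9 := by ring
    rw [hshift]
    positivity
  · rw [mul_pow, discrSqrt_sq, ← sub_pos]
    have hshift : (4 * (1 + y) ^ 9 - 33 * (1 + y) ^ 7 + 1470 * (1 + y) ^ 5 + 3268 * (1 + y) ^ 3 +
        1416 * (1 + y)) ^ 2 - (4 * (1 + y) ^ 6 - 63 * (1 + y) ^ 4 - 96 * (1 + y) ^ 2 - 20) ^ 2 *
          (((1 + y) ^ 3 - 6 * (1 + y)) ^ 2 + 720 * (1 + y) ^ 2 + 480) =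
        48 * y ^ 3 * (343000 + 1617300 * y + 3615810 * y ^ 2 + 4954899 * y ^ 3 +
          4546632 * y ^ 4 + 2873229 * y ^ 5 + 1237516 * y ^ 6 + 345318 * y ^ 7 + 57120 * y ^ 8 +
          7126 * y ^ 9 + 2562 * y ^ 10 + 903 * y ^ 11 + 144 * y ^ 12 + 9 * y ^ 13) := by ring
    rw [hshift]
    positivity

lemma continuous_upperRoot : Continuous upperRoot := by
  unfold upperRoot discrSqrt
  fun_prop (disch := intros; positivity)

lemma zetaThreeHalves_lt_upperRoot (hx : 1 < x) : zetaThreeHalves x < upperRoot x := by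
  have hpos := pos_of_eq_zero_of_hasDerivAt_pos
    (continuous_upperRoot.continuousOn.sub continuousOn_zetaThreeHalves)
    (by simp [upperRoot, zetaThreeHalves]) (fun _ hy => hasDerivAt_upperRoot_sub_zetaThreeHalves hy)
    (fun y hy => by
      have := sqrt_sq_sub_one_pos hy
      have := discrSqrt_pos y
      have := add_mul_discrSqrt_pos hy
      positivity) hx
  exact sub_pos.1 hpos

lemma quadratic_zetaThreeHalves_neg (hx : 1 < x) :
    (18 * x ^ 2 + 12) * zetaThreeHalves x ^ 2 - (x ^ 3 - 6 * x) * √(x ^ 2 - 1) ^ 3 *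
      zetaThreeHalves x - 10 * (√(x ^ 2 - 1) ^ 3) ^ 2 < 0 := by
  have hs := sqrt_sq_sub_one_pos hx
  have hq := discrSqrt_pos x
  have hroot := zetaThreeHalves_lt_upperRoot hx
  rw [upperRoot, lt_div_iff₀ (by positivity)] at hroot
  exact quadratic_neg_of_lt_root (δ := √(x ^ 2 - 1) ^ 3 * discrSqrt x) (by positivity)
    (by positivity) (by positivity) (by rw [mul_pow, discrSqrt_sq]; ring)
    (zetaThreeHalves_pos hx) (by linarith)

lemma strictAntiOn_negB0Closed : StrictAntiOn negB0Closed (Ioi 1) := by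
  refine strictAntiOn_of_deriv_neg (convex_Ioi 1)
    (fun y hy => (hasDerivAt_negB0Closed hy).continuousAt.continuousWithinAt) fun y hy => ?_
  rw [interior_Ioi] at hy
  have := sqrt_sq_sub_one_pos hy
  have := sqrtZeta_pos hy
  rw [(hasDerivAt_negB0Closed hy).deriv]
  exact div_neg_of_neg_of_pos (quadratic_zetaThreeHalves_neg hy) (by positivity)

lemma sub_one_le_sqrt_sq_sub_one (hx : 1 ≤ x) : x - 1 ≤ √(x ^ 2 - 1) :=
  (Real.le_sqrt (by linarith) (by nlinarith)).2 (by nlinarith)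

lemma le_zetaThreeHalves (hx : 5 ≤ x) : x ≤ zetaThreeHalves x := by
  have hs := sub_one_le_sqrt_sq_sub_one (by linarith : 1 ≤ x)
  have harcosh : Real.arcosh x ≤ x + √(x ^ 2 - 1) - 1 :=
    Real.log_le_sub_one_of_pos (by positivity)
  unfold zetaThreeHalves
  nlinarith

lemma tendsto_sqrtZeta_atTop : Tendsto sqrtZeta atTop atTop :=
  (tendsto_rpow_atTop (by norm_num)).comp <| tendsto_atTop_mono' atTop
    ((eventually_ge_atTop 5).mono fun _ => le_zetaThreeHalves) tendsto_id

lemma ratTerm_nonneg (hx : 3 ≤ x) : 0 ≤ ratTerm x :=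
  div_nonneg (by nlinarith [mul_nonneg (by linarith : 0 ≤ x) (by nlinarith : 0 ≤ x ^ 2 - 6)])
    (by positivity)

lemma ratTerm_le (hx : 2 ≤ x) : ratTerm x ≤ 1 / 3 := by
  have hs : x / 2 ≤ √(x ^ 2 - 1) := by
    linarith [sub_one_le_sqrt_sq_sub_one (by linarith : 1 ≤ x)]
  have hcube := pow_le_pow_left₀ (by positivity) hs 3
  rw [ratTerm, div_le_iff₀ (by nlinarith)]
  nlinarith

lemma tendsto_negB0Closed_atTop : Tendsto negB0Closed atTop (𝓝 0) := by
  have hu := tendsto_sqrtZeta_atTop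
  have hu4 : Tendsto (fun x => 48 * sqrtZeta x ^ 4) atTop atTop :=
    ((tendsto_pow_atTop (by norm_num : 4 ≠ 0)).comp hu).const_mul_atTop (by norm_num)
  have hbound :
      Tendsto (fun x => 1 / 3 / sqrtZeta x + 5 / (48 * sqrtZeta x ^ 4)) atTop (𝓝 0) := by
    simpa using (tendsto_const_nhds.div_atTop hu).add (tendsto_const_nhds.div_atTop hu4)
  refine tendsto_of_tendsto_of_tendsto_of_le_of_le' tendsto_const_nhds hbound ?_ ?_
  all_goals filter_upwards [eventually_ge_atTop 3] with x hx
  all_goals have hu_pos := sqrtZeta_pos (by linarith : 1 < x)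
  · have := ratTerm_nonneg hx
    unfold negB0Closed
    positivity
  · unfold negB0Closed
    gcongr
    exact ratTerm_le (by linarith)

end B0

end

theorem neg_b0_strictAnti_and_tendsto_zero :
    StrictAntiOn (fun x : ℝ => -b0 x) (Set.Ioi (1 : ℝ)) ∧
      Tendsto (fun x : ℝ => -b0 x) atTop (nhds 0) := by
  refine ⟨B0.strictAntiOn_negB0Closed.congr fun x hx => (B0.neg_b0_eq hx).symm,
    B0.tendsto_negB0Closed_atTop.congr' ?_⟩
  filter_upwards [eventually_gt_atTop 1] with x hx
  exact (B0.neg_b0_eq hx).symm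
end

section
/- As x → 1 from the right, the product φ(x)·b₀(x) tends to −(9/280)·2^{−1/3}, where φ(x) = ζ(x)/(x²−1), b₀(x) = −(1/(2·ζ(x)^{1/2}))·( x(x²−6)/(12(x²−1)^{3/2}) + 5/(24·ζ(x)^{3/2}) ), and ζ(x) = ( (3/4)·( x·√(x²−1) − arcosh x ) )^{2/3}. -/
open Real Filter

/-!
Substituting `x = cosh θ` gives `ζ = ((3/4)(sinh θ cosh θ - θ))^{2/3}`, and `φ · b₀` becomes
`-((3/4)(sinh θ cosh θ - θ) / sinh³ θ)^{1/3} · N(θ) / (72 (sinh θ cosh θ - θ) sinh⁴ θ)` with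
`N(θ) = 3 cosh θ (cosh² θ - 6)(sinh θ cosh θ - θ) + 10 sinh³ θ`. Writing `N` through `exp(±θ)`,
`exp(±3θ)`, `exp(±5θ)` and their Taylor tails shows `N(θ) = (54/35) θ⁷ + O(θ⁸)`, while
`sinh θ cosh θ - θ ~ (2/3) θ³` and `sinh θ ~ θ`; the limit is `-(1/2)^{1/3} · 54/35 / 48`.
-/

open Asymptotics Topology
open scoped Nat

noncomputable def expTail (n : ℕ) (y : ℝ) : ℝ :=
  exp y - ∑ i ∈ Finset.range n, y ^ i / i !

lemma expTail_comp_mul_isBigO (n : ℕ) (a : ℝ) :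
    (fun θ ↦ expTail n (a * θ)) =O[𝓝 0] (· ^ n) := by
  have hlim : Tendsto (fun θ : ℝ ↦ a * θ) (𝓝 0) (𝓝 0) := by
    simpa using (continuous_const_mul a).tendsto 0
  refine ((exp_sub_sum_range_isBigO_pow n).comp_tendsto hlim).trans ?_
  simpa only [Function.comp_def, mul_pow] using
    (isBigO_refl (· ^ n) (𝓝 (0 : ℝ))).const_mul_left (a ^ n)

lemma tendsto_div_pow_of_isBigO_sub {𝕜 : Type*} [NormedField 𝕜] {f : 𝕜 → 𝕜} {c : 𝕜} {k : ℕ}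
    (h : (fun θ ↦ f θ - c * θ ^ k) =O[𝓝 0] (· ^ (k + 1))) :
    Tendsto (fun θ ↦ f θ / θ ^ k) (𝓝[≠] 0) (𝓝 c) := by
  have hquot : (fun θ ↦ f θ / θ ^ k - c) =O[𝓝[≠] 0] (fun θ ↦ θ) := by
    refine ((h.mono nhdsWithin_le_nhds).mul (isBigO_refl (fun θ : 𝕜 ↦ (θ ^ k)⁻¹) _)).congr' ?_ ?_
    all_goals filter_upwards [self_mem_nhdsWithin] with θ (hθ : θ ≠ 0)
    · field_simp
    · field_simp
      ring
  exact tendsto_sub_nhds_zero_iff.1 (hquot.trans_tendsto (tendsto_id.mono_left nhdsWithin_le_nhds))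

lemma pow_rpow_eq_pow {t r : ℝ} (ht : 0 ≤ t) {n m : ℕ} (h : n * r = m) :
    (t ^ n) ^ r = t ^ m := by
  rw [← Real.rpow_natCast_mul ht, h, Real.rpow_natCast]

noncomputable def sinhMulCoshSub (θ : ℝ) : ℝ := sinh θ * cosh θ - θ

noncomputable def b0Numerator (θ : ℝ) : ℝ :=
  3 * cosh θ * (cosh θ ^ 2 - 6) * sinhMulCoshSub θ + 10 * sinh θ ^ 3

lemma sinh_sub_self_eq_expTail (θ : ℝ) :
    sinh θ - θ = (expTail 2 θ - expTail 2 (-θ)) / 2 := by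
  simp only [expTail, sinh_eq, Finset.sum_range_succ, Finset.sum_range_zero]
  norm_num
  ring

lemma sinhMulCoshSub_sub_eq_expTail (θ : ℝ) :
    sinhMulCoshSub θ - 2 / 3 * θ ^ 3 = (expTail 4 (2 * θ) - expTail 4 (-(2 * θ))) / 4 := by
  have hE := (exp_pos θ).ne'
  simp only [sinhMulCoshSub, expTail, sinh_eq, cosh_eq, Finset.sum_range_succ,
    Finset.sum_range_zero, exp_neg]
  rw [show 2 * θ = ((2 : ℕ) : ℝ) * θ by norm_num, exp_nat_mul]
  norm_num [Nat.factorial]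
  field_simp
  ring

lemma b0Numerator_sub_eq_expTail (θ : ℝ) :
    b0Numerator θ - 54 / 35 * θ ^ 7 =
      3 / 32 * (expTail 8 (5 * θ) - expTail 8 (-(5 * θ)))
        - 23 / 32 * (expTail 8 (3 * θ) - expTail 8 (-(3 * θ)))
        - 93 / 16 * (expTail 8 θ - expTail 8 (-θ))
        - 3 / 8 * θ * (expTail 8 (3 * θ) + expTail 8 (-(3 * θ)))
        + 63 / 8 * θ * (expTail 8 θ + expTail 8 (-θ)) := by
  have hE := (exp_pos θ).ne'
  simp only [b0Numerator, sinhMulCoshSub, expTail, sinh_eq, cosh_eq, Finset.sum_range_succ,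
    Finset.sum_range_zero, exp_neg]
  rw [show 5 * θ = ((5 : ℕ) : ℝ) * θ by norm_num, show 3 * θ = ((3 : ℕ) : ℝ) * θ by norm_num,
    exp_nat_mul, exp_nat_mul]
  norm_num [Nat.factorial]
  field_simp
  ring

lemma tendsto_sinh_div_self : Tendsto (fun θ ↦ sinh θ / θ) (𝓝[≠] 0) (𝓝 1) := by
  have h := (expTail_comp_mul_isBigO 2 1).sub (expTail_comp_mul_isBigO 2 (-1))
  simpa using tendsto_div_pow_of_isBigO_sub (f := sinh) (c := 1) (k := 1)
    (by simpa [sinh_sub_self_eq_expTail, div_eq_inv_mul] using h.const_mul_left (1 / 2))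

lemma tendsto_sinhMulCoshSub_div :
    Tendsto (fun θ ↦ sinhMulCoshSub θ / θ ^ 3) (𝓝[≠] 0) (𝓝 (2 / 3)) := by
  have h := (expTail_comp_mul_isBigO 4 2).sub (expTail_comp_mul_isBigO 4 (-2))
  refine tendsto_div_pow_of_isBigO_sub ?_
  simp only [sinhMulCoshSub_sub_eq_expTail]
  simpa [div_eq_inv_mul] using h.const_mul_left (1 / 4)

lemma tendsto_b0Numerator_div :
    Tendsto (fun θ ↦ b0Numerator θ / θ ^ 7) (𝓝[≠] 0) (𝓝 (54 / 35)) := by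
  have hT (a : ℝ) := expTail_comp_mul_isBigO 8 a
  have hθ : (fun θ : ℝ ↦ θ) =O[𝓝 0] (fun _ ↦ (1 : ℝ)) := (continuous_id.tendsto 0).isBigO_one ℝ
  have hodd (a : ℝ) := (hT a).sub (hT (-a))
  have heven (a : ℝ) : (fun θ ↦ θ * (expTail 8 (a * θ) + expTail 8 (-a * θ))) =O[𝓝 0] (· ^ 8) := by
    simpa only [one_mul] using hθ.mul ((hT a).add (hT (-a)))
  refine tendsto_div_pow_of_isBigO_sub ?_
  have := (((((hodd 5).const_mul_left (3 / 32)).sub ((hodd 3).const_mul_left (23 / 32))).sub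
    ((hodd 1).const_mul_left (93 / 16))).sub ((heven 3).const_mul_left (3 / 8))).add
    ((heven 1).const_mul_left (63 / 8))
  simpa [b0Numerator_sub_eq_expTail, mul_assoc] using this

lemma sinhMulCoshSub_pos {θ : ℝ} (hθ : 0 < θ) : 0 < sinhMulCoshSub θ := by
  have h := self_lt_sinh_iff.2 (by positivity : 0 < 2 * θ)
  rw [sinh_two_mul] at h
  unfold sinhMulCoshSub
  linarith

lemma arcosh_eq_real_arcosh : _root_.arcosh = Real.arcosh := rfl

lemma zeta_cosh {θ : ℝ} (hθ : 0 ≤ θ) :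
    zeta (cosh θ) = (3 / 4 * sinhMulCoshSub θ) ^ ((2 : ℝ) / 3) := by
  rw [zeta, arcosh_eq_real_arcosh, arcosh_cosh hθ, ← sinh_sq, sqrt_sq (sinh_nonneg_iff.2 hθ),
    sinhMulCoshSub, mul_comm (cosh θ)]

lemma phi_mul_b0_cosh {θ : ℝ} (hθ : 0 < θ) :
    phi (cosh θ) * b0 (cosh θ) =
      -(3 / 4 * sinhMulCoshSub θ / sinh θ ^ 3) ^ ((1 : ℝ) / 3) *
        (b0Numerator θ / (72 * sinhMulCoshSub θ * sinh θ ^ 4)) := by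
  have hs : 0 < sinh θ := sinh_pos_iff.2 hθ
  have hB0 : 0 < 3 / 4 * sinhMulCoshSub θ := mul_pos (by norm_num) (sinhMulCoshSub_pos hθ)
  obtain ⟨t, ht, hB⟩ : ∃ t > 0, 3 / 4 * sinhMulCoshSub θ = t ^ 3 :=
    ⟨_, rpow_pos_of_pos hB0 _, (rpow_inv_natCast_pow hB0.le three_ne_zero).symm⟩
  have hz : zeta (cosh θ) = t ^ 2 := by
    rw [zeta_cosh hθ.le, hB, pow_rpow_eq_pow ht.le (m := 2) (by norm_num)]
  have hz_half : zeta (cosh θ) ^ ((1 : ℝ) / 2) = t := by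
    rw [hz, pow_rpow_eq_pow ht.le (m := 1) (by norm_num), pow_one]
  have hz_three_halves : zeta (cosh θ) ^ ((3 : ℝ) / 2) = t ^ 3 := by
    rw [hz, pow_rpow_eq_pow ht.le (m := 3) (by norm_num)]
  have hs_three_halves : (cosh θ ^ 2 - 1) ^ ((3 : ℝ) / 2) = sinh θ ^ 3 := by
    rw [← sinh_sq, pow_rpow_eq_pow hs.le (m := 3) (by norm_num)]
  have hcube_root : (3 / 4 * sinhMulCoshSub θ / sinh θ ^ 3) ^ ((1 : ℝ) / 3) = t / sinh θ := by
    rw [hB, ← div_pow, pow_rpow_eq_pow (by positivity) (m := 1) (by norm_num), pow_one]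
  have hS : sinhMulCoshSub θ = 4 / 3 * t ^ 3 := by linarith
  unfold phi b0 b0Numerator
  rw [hz_half, hz_three_halves, hz, hs_three_halves, ← sinh_sq, hcube_root, hS]
  field_simp
  ring

lemma tendsto_phi_mul_b0_cosh :
    Tendsto (fun θ ↦ phi (cosh θ) * b0 (cosh θ)) (𝓝[>] 0)
      (𝓝 (-(9 / 280) * (2 : ℝ) ^ (-(1 : ℝ) / 3))) := by
  have hGT : 𝓝[>] (0 : ℝ) ≤ 𝓝[≠] 0 := nhdsWithin_mono _ fun θ hθ ↦ ne_of_gt hθ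
  have hsinh := tendsto_sinh_div_self.mono_left hGT
  have hS := tendsto_sinhMulCoshSub_div.mono_left hGT
  have hN := tendsto_b0Numerator_div.mono_left hGT
  have hratio :
      Tendsto (fun θ ↦ 3 / 4 * sinhMulCoshSub θ / sinh θ ^ 3) (𝓝[>] 0) (𝓝 (1 / 2)) := by
    have h := (hS.const_mul (3 / 4)).div (hsinh.pow 3) (by norm_num)
    rw [show (1 / 2 : ℝ) = 3 / 4 * (2 / 3) / 1 ^ 3 by norm_num]
    refine h.congr' ?_
    filter_upwards [self_mem_nhdsWithin] with θ (hθ : 0 < θ)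
    have := (sinh_pos_iff.2 hθ).ne'
    rw [Pi.div_apply]
    field_simp
  have hquot : Tendsto (fun θ ↦ b0Numerator θ / (72 * sinhMulCoshSub θ * sinh θ ^ 4)) (𝓝[>] 0)
      (𝓝 (9 / 280)) := by
    have h := hN.div ((hS.const_mul 72).mul (hsinh.pow 4)) (by norm_num)
    rw [show (9 / 280 : ℝ) = 54 / 35 / (72 * (2 / 3) * 1 ^ 4) by norm_num]
    refine h.congr' ?_
    filter_upwards [self_mem_nhdsWithin] with θ (hθ : 0 < θ)
    have := (sinh_pos_iff.2 hθ).ne'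
    have := (sinhMulCoshSub_pos hθ).ne'
    rw [Pi.div_apply]
    field_simp
  have hlim := ((hratio.rpow_const (p := (1 : ℝ) / 3) (Or.inl (by norm_num))).neg.mul hquot)
  have hval :
      -(1 / 2 : ℝ) ^ ((1 : ℝ) / 3) * (9 / 280) = -(9 / 280) * (2 : ℝ) ^ (-(1 : ℝ) / 3) := by
    rw [one_div, inv_rpow zero_le_two, neg_div, rpow_neg zero_le_two]
    ring
  rw [← hval]
  refine hlim.congr' ?_
  filter_upwards [self_mem_nhdsWithin] with θ (hθ : 0 < θ)
  rw [phi_mul_b0_cosh hθ]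

lemma tendsto_arcosh_nhdsGT_one : Tendsto Real.arcosh (𝓝[>] 1) (𝓝[>] 0) := by
  refine tendsto_nhdsWithin_iff.2 ⟨?_, eventually_nhdsWithin_of_forall fun x hx ↦ arcosh_pos hx⟩
  simpa using ((continuousOn_arcosh 1 Set.self_mem_Ici).tendsto).mono_left
    (nhdsWithin_mono _ Set.Ioi_subset_Ici_self)

theorem tendsto_phi_mul_b0_one :
    Tendsto (fun x : ℝ => phi x * b0 x) (nhdsWithin 1 (Set.Ioi 1))
      (nhds (-(9 / 280) * (2 : ℝ) ^ (-(1 : ℝ) / 3))) := by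
  refine (tendsto_phi_mul_b0_cosh.comp tendsto_arcosh_nhdsGT_one).congr' ?_
  filter_upwards [self_mem_nhdsWithin] with x (hx : 1 < x)
  simp only [Function.comp_apply, cosh_arcosh hx.le]
end
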